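/- The linear map M_G : ℝ^15 → ℝ^18 defined below has rank exactly 12, and its kernel is exactly the 3-dimensional subspace consisting of all vectors c^G_0(λ1,λ2,λ3) = (λ3−λ1−λ2, λ2−λ1−λ3, λ1−λ2−λ3, λ3−λ1−λ2, λ3−λ1−λ2, λ2−λ1−λ3, λ2−λ1−λ3, λ1−λ2−λ3, λ1−λ2−λ3, λ1+λ2−λ3, λ1−λ2+λ3, λ2+λ3−λ1, 2λ1, 2λ2, 2λ3) ∈ ℝ^15 with λ1, λ2, λ3 ∈ ℝ. -/
import Mathlib


noncomputable section

set_option maxHeartbeats 2000000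

lemma finv_4_3 : ((3 : Fin 4)) = Fin.succ (2 : Fin 3) := rfl
lemma finv_5_3 : ((3 : Fin 5)) = Fin.succ (2 : Fin 4) := rfl
lemma finv_5_4 : ((4 : Fin 5)) = Fin.succ (3 : Fin 4) := rfl
lemma finv_6_3 : ((3 : Fin 6)) = Fin.succ (2 : Fin 5) := rfl
lemma finv_6_4 : ((4 : Fin 6)) = Fin.succ (3 : Fin 5) := rfl
lemma finv_6_5 : ((5 : Fin 6)) = Fin.succ (4 : Fin 5) := rfl
lemma finv_7_3 : ((3 : Fin 7)) = Fin.succ (2 : Fin 6) := rfl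
lemma finv_7_4 : ((4 : Fin 7)) = Fin.succ (3 : Fin 6) := rfl
lemma finv_7_5 : ((5 : Fin 7)) = Fin.succ (4 : Fin 6) := rfl
lemma finv_7_6 : ((6 : Fin 7)) = Fin.succ (5 : Fin 6) := rfl
lemma finv_8_3 : ((3 : Fin 8)) = Fin.succ (2 : Fin 7) := rfl
lemma finv_8_4 : ((4 : Fin 8)) = Fin.succ (3 : Fin 7) := rfl
lemma finv_8_5 : ((5 : Fin 8)) = Fin.succ (4 : Fin 7) := rfl
lemma finv_8_6 : ((6 : Fin 8)) = Fin.succ (5 : Fin 7) := rfl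
lemma finv_8_7 : ((7 : Fin 8)) = Fin.succ (6 : Fin 7) := rfl
lemma finv_9_3 : ((3 : Fin 9)) = Fin.succ (2 : Fin 8) := rfl
lemma finv_9_4 : ((4 : Fin 9)) = Fin.succ (3 : Fin 8) := rfl
lemma finv_9_5 : ((5 : Fin 9)) = Fin.succ (4 : Fin 8) := rfl
lemma finv_9_6 : ((6 : Fin 9)) = Fin.succ (5 : Fin 8) := rfl
lemma finv_9_7 : ((7 : Fin 9)) = Fin.succ (6 : Fin 8) := rfl
lemma finv_9_8 : ((8 : Fin 9)) = Fin.succ (7 : Fin 8) := rfl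
lemma finv_10_3 : ((3 : Fin 10)) = Fin.succ (2 : Fin 9) := rfl
lemma finv_10_4 : ((4 : Fin 10)) = Fin.succ (3 : Fin 9) := rfl
lemma finv_10_5 : ((5 : Fin 10)) = Fin.succ (4 : Fin 9) := rfl
lemma finv_10_6 : ((6 : Fin 10)) = Fin.succ (5 : Fin 9) := rfl
lemma finv_10_7 : ((7 : Fin 10)) = Fin.succ (6 : Fin 9) := rfl
lemma finv_10_8 : ((8 : Fin 10)) = Fin.succ (7 : Fin 9) := rfl
lemma finv_10_9 : ((9 : Fin 10)) = Fin.succ (8 : Fin 9) := rfl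
lemma finv_11_3 : ((3 : Fin 11)) = Fin.succ (2 : Fin 10) := rfl
lemma finv_11_4 : ((4 : Fin 11)) = Fin.succ (3 : Fin 10) := rfl
lemma finv_11_5 : ((5 : Fin 11)) = Fin.succ (4 : Fin 10) := rfl
lemma finv_11_6 : ((6 : Fin 11)) = Fin.succ (5 : Fin 10) := rfl
lemma finv_11_7 : ((7 : Fin 11)) = Fin.succ (6 : Fin 10) := rfl
lemma finv_11_8 : ((8 : Fin 11)) = Fin.succ (7 : Fin 10) := rfl
lemma finv_11_9 : ((9 : Fin 11)) = Fin.succ (8 : Fin 10) := rfl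
lemma finv_11_10 : ((10 : Fin 11)) = Fin.succ (9 : Fin 10) := rfl
lemma finv_12_3 : ((3 : Fin 12)) = Fin.succ (2 : Fin 11) := rfl
lemma finv_12_4 : ((4 : Fin 12)) = Fin.succ (3 : Fin 11) := rfl
lemma finv_12_5 : ((5 : Fin 12)) = Fin.succ (4 : Fin 11) := rfl
lemma finv_12_6 : ((6 : Fin 12)) = Fin.succ (5 : Fin 11) := rfl
lemma finv_12_7 : ((7 : Fin 12)) = Fin.succ (6 : Fin 11) := rfl
lemma finv_12_8 : ((8 : Fin 12)) = Fin.succ (7 : Fin 11) := rfl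
lemma finv_12_9 : ((9 : Fin 12)) = Fin.succ (8 : Fin 11) := rfl
lemma finv_12_10 : ((10 : Fin 12)) = Fin.succ (9 : Fin 11) := rfl
lemma finv_12_11 : ((11 : Fin 12)) = Fin.succ (10 : Fin 11) := rfl
lemma finv_13_3 : ((3 : Fin 13)) = Fin.succ (2 : Fin 12) := rfl
lemma finv_13_4 : ((4 : Fin 13)) = Fin.succ (3 : Fin 12) := rfl
lemma finv_13_5 : ((5 : Fin 13)) = Fin.succ (4 : Fin 12) := rfl
lemma finv_13_6 : ((6 : Fin 13)) = Fin.succ (5 : Fin 12) := rfl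
lemma finv_13_7 : ((7 : Fin 13)) = Fin.succ (6 : Fin 12) := rfl
lemma finv_13_8 : ((8 : Fin 13)) = Fin.succ (7 : Fin 12) := rfl
lemma finv_13_9 : ((9 : Fin 13)) = Fin.succ (8 : Fin 12) := rfl
lemma finv_13_10 : ((10 : Fin 13)) = Fin.succ (9 : Fin 12) := rfl
lemma finv_13_11 : ((11 : Fin 13)) = Fin.succ (10 : Fin 12) := rfl
lemma finv_13_12 : ((12 : Fin 13)) = Fin.succ (11 : Fin 12) := rfl
lemma finv_14_3 : ((3 : Fin 14)) = Fin.succ (2 : Fin 13) := rfl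
lemma finv_14_4 : ((4 : Fin 14)) = Fin.succ (3 : Fin 13) := rfl
lemma finv_14_5 : ((5 : Fin 14)) = Fin.succ (4 : Fin 13) := rfl
lemma finv_14_6 : ((6 : Fin 14)) = Fin.succ (5 : Fin 13) := rfl
lemma finv_14_7 : ((7 : Fin 14)) = Fin.succ (6 : Fin 13) := rfl
lemma finv_14_8 : ((8 : Fin 14)) = Fin.succ (7 : Fin 13) := rfl
lemma finv_14_9 : ((9 : Fin 14)) = Fin.succ (8 : Fin 13) := rfl
lemma finv_14_10 : ((10 : Fin 14)) = Fin.succ (9 : Fin 13) := rfl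
lemma finv_14_11 : ((11 : Fin 14)) = Fin.succ (10 : Fin 13) := rfl
lemma finv_14_12 : ((12 : Fin 14)) = Fin.succ (11 : Fin 13) := rfl
lemma finv_14_13 : ((13 : Fin 14)) = Fin.succ (12 : Fin 13) := rfl
lemma finv_15_3 : ((3 : Fin 15)) = Fin.succ (2 : Fin 14) := rfl
lemma finv_15_4 : ((4 : Fin 15)) = Fin.succ (3 : Fin 14) := rfl
lemma finv_15_5 : ((5 : Fin 15)) = Fin.succ (4 : Fin 14) := rfl
lemma finv_15_6 : ((6 : Fin 15)) = Fin.succ (5 : Fin 14) := rfl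
lemma finv_15_7 : ((7 : Fin 15)) = Fin.succ (6 : Fin 14) := rfl
lemma finv_15_8 : ((8 : Fin 15)) = Fin.succ (7 : Fin 14) := rfl
lemma finv_15_9 : ((9 : Fin 15)) = Fin.succ (8 : Fin 14) := rfl
lemma finv_15_10 : ((10 : Fin 15)) = Fin.succ (9 : Fin 14) := rfl
lemma finv_15_11 : ((11 : Fin 15)) = Fin.succ (10 : Fin 14) := rfl
lemma finv_15_12 : ((12 : Fin 15)) = Fin.succ (11 : Fin 14) := rfl
lemma finv_15_13 : ((13 : Fin 15)) = Fin.succ (12 : Fin 14) := rfl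
lemma finv_15_14 : ((14 : Fin 15)) = Fin.succ (13 : Fin 14) := rfl
lemma finv_16_3 : ((3 : Fin 16)) = Fin.succ (2 : Fin 15) := rfl
lemma finv_16_4 : ((4 : Fin 16)) = Fin.succ (3 : Fin 15) := rfl
lemma finv_16_5 : ((5 : Fin 16)) = Fin.succ (4 : Fin 15) := rfl
lemma finv_16_6 : ((6 : Fin 16)) = Fin.succ (5 : Fin 15) := rfl
lemma finv_16_7 : ((7 : Fin 16)) = Fin.succ (6 : Fin 15) := rfl
lemma finv_16_8 : ((8 : Fin 16)) = Fin.succ (7 : Fin 15) := rfl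
lemma finv_16_9 : ((9 : Fin 16)) = Fin.succ (8 : Fin 15) := rfl
lemma finv_16_10 : ((10 : Fin 16)) = Fin.succ (9 : Fin 15) := rfl
lemma finv_16_11 : ((11 : Fin 16)) = Fin.succ (10 : Fin 15) := rfl
lemma finv_16_12 : ((12 : Fin 16)) = Fin.succ (11 : Fin 15) := rfl
lemma finv_16_13 : ((13 : Fin 16)) = Fin.succ (12 : Fin 15) := rfl
lemma finv_16_14 : ((14 : Fin 16)) = Fin.succ (13 : Fin 15) := rfl
lemma finv_16_15 : ((15 : Fin 16)) = Fin.succ (14 : Fin 15) := rfl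
lemma finv_17_3 : ((3 : Fin 17)) = Fin.succ (2 : Fin 16) := rfl
lemma finv_17_4 : ((4 : Fin 17)) = Fin.succ (3 : Fin 16) := rfl
lemma finv_17_5 : ((5 : Fin 17)) = Fin.succ (4 : Fin 16) := rfl
lemma finv_17_6 : ((6 : Fin 17)) = Fin.succ (5 : Fin 16) := rfl
lemma finv_17_7 : ((7 : Fin 17)) = Fin.succ (6 : Fin 16) := rfl
lemma finv_17_8 : ((8 : Fin 17)) = Fin.succ (7 : Fin 16) := rfl
lemma finv_17_9 : ((9 : Fin 17)) = Fin.succ (8 : Fin 16) := rfl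
lemma finv_17_10 : ((10 : Fin 17)) = Fin.succ (9 : Fin 16) := rfl
lemma finv_17_11 : ((11 : Fin 17)) = Fin.succ (10 : Fin 16) := rfl
lemma finv_17_12 : ((12 : Fin 17)) = Fin.succ (11 : Fin 16) := rfl
lemma finv_17_13 : ((13 : Fin 17)) = Fin.succ (12 : Fin 16) := rfl
lemma finv_17_14 : ((14 : Fin 17)) = Fin.succ (13 : Fin 16) := rfl
lemma finv_17_15 : ((15 : Fin 17)) = Fin.succ (14 : Fin 16) := rfl
lemma finv_17_16 : ((16 : Fin 17)) = Fin.succ (15 : Fin 16) := rfl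
lemma finv_18_3 : ((3 : Fin 18)) = Fin.succ (2 : Fin 17) := rfl
lemma finv_18_4 : ((4 : Fin 18)) = Fin.succ (3 : Fin 17) := rfl
lemma finv_18_5 : ((5 : Fin 18)) = Fin.succ (4 : Fin 17) := rfl
lemma finv_18_6 : ((6 : Fin 18)) = Fin.succ (5 : Fin 17) := rfl
lemma finv_18_7 : ((7 : Fin 18)) = Fin.succ (6 : Fin 17) := rfl
lemma finv_18_8 : ((8 : Fin 18)) = Fin.succ (7 : Fin 17) := rfl
lemma finv_18_9 : ((9 : Fin 18)) = Fin.succ (8 : Fin 17) := rfl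
lemma finv_18_10 : ((10 : Fin 18)) = Fin.succ (9 : Fin 17) := rfl
lemma finv_18_11 : ((11 : Fin 18)) = Fin.succ (10 : Fin 17) := rfl
lemma finv_18_12 : ((12 : Fin 18)) = Fin.succ (11 : Fin 17) := rfl
lemma finv_18_13 : ((13 : Fin 18)) = Fin.succ (12 : Fin 17) := rfl
lemma finv_18_14 : ((14 : Fin 18)) = Fin.succ (13 : Fin 17) := rfl
lemma finv_18_15 : ((15 : Fin 18)) = Fin.succ (14 : Fin 17) := rfl
lemma finv_18_16 : ((16 : Fin 18)) = Fin.succ (15 : Fin 17) := rfl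
lemma finv_18_17 : ((17 : Fin 18)) = Fin.succ (16 : Fin 17) := rfl





/-- The coefficient matrix `M_G` of the type-G divergence system:
rows are `d62,…,d79`, columns are `c69,…,c83`. -/
def MG : Matrix (Fin 18) (Fin 15) ℝ :=
  !![0, 0, 0, 1, 0, 0, 0, 0, 0, 1, 0, 0, 0, 0, 0;
    0, 1, 0, 1, 0, 0, 0, 0, 0, 0, 0, 0, 1, 0, 0;
    0, 0, 0, 1, 0, 0, 0, 0, 1, 0, 0, 0, 0, 1, 0;
    0, 0, 0, 0, 1, 0, 0, 0, 0, 1, 0, 0, 0, 0, 0;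
    0, 0, 0, 0, 1, 1, 0, 0, 0, 0, 0, 0, 1, 0, 0;
    0, 0, 1, 0, 1, 0, 0, 0, 0, 0, 0, 0, 0, 1, 0;
    0, 0, 0, 0, 0, 1, 0, 0, 0, 0, 1, 0, 0, 0, 0;
    0, 0, 1, 0, 0, 1, 0, 0, 0, 0, 0, 0, 0, 0, 1;
    1, 0, 0, 0, 0, 0, 1, 0, 0, 0, 0, 0, 1, 0, 0;
    0, 0, 0, 0, 0, 0, 1, 0, 0, 0, 1, 0, 0, 0, 0;
    0, 0, 0, 0, 0, 0, 1, 1, 0, 0, 0, 0, 0, 0, 1;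
    1, 0, 0, 0, 0, 0, 0, 1, 0, 0, 0, 0, 0, 1, 0;
    0, 0, 0, 0, 0, 0, 0, 1, 0, 0, 0, 1, 0, 0, 0;
    0, 1, 0, 0, 0, 0, 0, 0, 1, 0, 0, 0, 0, 0, 1;
    0, 0, 0, 0, 0, 0, 0, 0, 1, 0, 0, 1, 0, 0, 0;
    0, 0, 1, 0, 0, 0, 0, 0, 0, 0, 0, 1, 0, 0, 0;
    0, 1, 0, 0, 0, 0, 0, 0, 0, 0, 1, 0, 0, 0, 0;
    1, 0, 0, 0, 0, 0, 0, 0, 0, 1, 0, 0, 0, 0, 0]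

/-- The kernel parametrization `c^G_0(λ1,λ2,λ3) ∈ ℝ^15`. -/
def cG0 (l1 l2 l3 : ℝ) : Fin 15 → ℝ :=
  ![-l1 - l2 + l3,
    -l1 + l2 - l3,
    l1 - l2 - l3,
    -l1 - l2 + l3,
    -l1 - l2 + l3,
    -l1 + l2 - l3,
    -l1 + l2 - l3,
    l1 - l2 - l3,
    l1 - l2 - l3,
    l1 + l2 - l3,
    l1 - l2 + l3,
    -l1 + l2 + l3,
    2 * l1,
    2 * l2,
    2 * l3]

lemma cG0_eq_sum (a b c : ℝ) :
    cG0 a b c = a • cG0 1 0 0 + b • cG0 0 1 0 + c • cG0 0 0 1 := by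
  funext i
  obtain ⟨i, hi⟩ := i
  interval_cases i <;> simp [cG0, finv_4_3, finv_5_3, finv_5_4, finv_6_3, finv_6_4, finv_6_5, finv_7_3, finv_7_4, finv_7_5, finv_7_6, finv_8_3, finv_8_4, finv_8_5, finv_8_6, finv_8_7, finv_9_3, finv_9_4, finv_9_5, finv_9_6, finv_9_7, finv_9_8, finv_10_3, finv_10_4, finv_10_5, finv_10_6, finv_10_7, finv_10_8, finv_10_9, finv_11_3, finv_11_4, finv_11_5, finv_11_6, finv_11_7, finv_11_8, finv_11_9, finv_11_10, finv_12_3, finv_12_4, finv_12_5, finv_12_6, finv_12_7, finv_12_8, finv_12_9, finv_12_10, finv_12_11, finv_13_3, finv_13_4, finv_13_5, finv_13_6, finv_13_7, finv_13_8, finv_13_9, finv_13_10, finv_13_11, finv_13_12, finv_14_3, finv_14_4, finv_14_5, finv_14_6, finv_14_7, finv_14_8, finv_14_9, finv_14_10, finv_14_11, finv_14_12, finv_14_13, finv_15_3, finv_15_4, finv_15_5, finv_15_6, finv_15_7, finv_15_8, finv_15_9, finv_15_10, finv_15_11, finv_15_12, finv_15_13, finv_15_14, finv_16_3, finv_16_4,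 finv_16_5, finv_16_6, finv_16_7, finv_16_8, finv_16_9, finv_16_10, finv_16_11, finv_16_12, finv_16_13, finv_16_14, finv_16_15, finv_17_3, finv_17_4, finv_17_5, finv_17_6, finv_17_7, finv_17_8, finv_17_9, finv_17_10, finv_17_11, finv_17_12, finv_17_13, finv_17_14, finv_17_15, finv_17_16, finv_18_3, finv_18_4, finv_18_5, finv_18_6, finv_18_7, finv_18_8, finv_18_9, finv_18_10, finv_18_11, finv_18_12, finv_18_13, finv_18_14, finv_18_15, finv_18_16, finv_18_17] <;> ring_nf

lemma ker_iff (c : Fin 15 → ℝ) : MG.mulVec c = 0 ↔ ∃ l1 l2 l3 : ℝ, c = cG0 l1 l2 l3 := by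
  constructor
  · intro h
    have h0 := congrFun h 0
    have h1 := congrFun h 1
    have h2 := congrFun h 2
    have h3 := congrFun h 3
    have h4 := congrFun h 4
    have h5 := congrFun h 5
    have h6 := congrFun h 6
    have h7 := congrFun h 7
    have h8 := congrFun h 8
    have h9 := congrFun h 9
    have h10 := congrFun h 10
    have h11 := congrFun h 11
    have h12 := congrFun h 12
    have h13 := congrFun h 13
    have h14 := congrFun h 14
    have h15 := congrFun h 15
    have h16 := congrFun h 16
    have h17 := congrFun h 17
    simp [MG, Matrix.mulVec, dotProduct, Fin.sum_univ_succ, finv_4_3, finv_5_3, finv_5_4, finv_6_3, finv_6_4, finv_6_5, finv_7_3, finv_7_4, finv_7_5, finv_7_6, finv_8_3, finv_8_4, finv_8_5, finv_8_6, finv_8_7, finv_9_3, finv_9_4, finv_9_5, finv_9_6, finv_9_7, finv_9_8, finv_10_3, finv_10_4, finv_10_5, finv_10_6, finv_10_7, finv_10_8, finv_10_9, finv_11_3, finv_11_4, finv_11_5, finv_11_6, finv_11_7, finv_11_8, finv_11_9, finv_11_10, finv_12_3, finv_12_4, finv_12_5, finv_12_6, finv_12_7, finv_12_8, finv_12_9,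 finv_12_10, finv_12_11, finv_13_3, finv_13_4, finv_13_5, finv_13_6, finv_13_7, finv_13_8, finv_13_9, finv_13_10, finv_13_11, finv_13_12, finv_14_3, finv_14_4, finv_14_5, finv_14_6, finv_14_7, finv_14_8, finv_14_9, finv_14_10, finv_14_11, finv_14_12, finv_14_13, finv_15_3, finv_15_4, finv_15_5, finv_15_6, finv_15_7, finv_15_8, finv_15_9, finv_15_10, finv_15_11, finv_15_12, finv_15_13, finv_15_14, finv_16_3, finv_16_4, finv_16_5, finv_16_6, finv_16_7, finv_16_8, finv_16_9, finv_16_10, finv_16_11, finv_16_12, finv_16_13, finv_16_14, finv_16_15, finv_17_3, finv_17_4, finv_17_5, finv_17_6, finv_17_7, finv_17_8, finv_17_9, finv_17_10, finv_17_11, finv_17_12, finv_17_13, finv_17_14, finv_17_15, finv_17_16, finv_18_3, finv_18_4, finv_18_5, finv_18_6, finv_18_7, finv_18_8, finv_18_9, finv_18_10, finv_18_11, finv_18_12, finv_18_13, finv_18_14, finv_18_15, finv_18_16, finv_18_17] at h0 h1 h2 h3 h4 h5 h6 h7 h8 h9 h10 h11 h12 h13 h14 h15 h16 h17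
    refine ⟨c 12 / 2, c 13 / 2, c 14 / 2, ?_⟩
    funext i
    obtain ⟨i, hi⟩ := i
    interval_cases i <;> simp [cG0, finv_4_3, finv_5_3, finv_5_4, finv_6_3, finv_6_4, finv_6_5, finv_7_3, finv_7_4, finv_7_5, finv_7_6, finv_8_3, finv_8_4, finv_8_5, finv_8_6, finv_8_7, finv_9_3, finv_9_4, finv_9_5, finv_9_6, finv_9_7, finv_9_8, finv_10_3, finv_10_4, finv_10_5, finv_10_6, finv_10_7, finv_10_8, finv_10_9, finv_11_3, finv_11_4, finv_11_5, finv_11_6, finv_11_7, finv_11_8, finv_11_9, finv_11_10, finv_12_3, finv_12_4, finv_12_5, finv_12_6, finv_12_7, finv_12_8, finv_12_9, finv_12_10, finv_12_11, finv_13_3, finv_13_4, finv_13_5, finv_13_6, finv_13_7, finv_13_8, finv_13_9, finv_13_10, finv_13_11, finv_13_12, finv_14_3, finv_14_4, finv_14_5, finv_14_6, finv_14_7, finv_14_8, finv_14_9, finv_14_10, finv_14_11, finv_14_12, finv_14_13, finv_15_3, finv_15_4, finv_15_5, finv_15_6, finv_15_7, finv_15_8, finv_15_9, finv_15_10, finv_15_11,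 finv_15_12, finv_15_13, finv_15_14, finv_16_3, finv_16_4, finv_16_5, finv_16_6, finv_16_7, finv_16_8, finv_16_9, finv_16_10, finv_16_11, finv_16_12, finv_16_13, finv_16_14, finv_16_15, finv_17_3, finv_17_4, finv_17_5, finv_17_6, finv_17_7, finv_17_8, finv_17_9, finv_17_10, finv_17_11, finv_17_12, finv_17_13, finv_17_14, finv_17_15, finv_17_16, finv_18_3, finv_18_4, finv_18_5, finv_18_6, finv_18_7, finv_18_8, finv_18_9, finv_18_10, finv_18_11, finv_18_12, finv_18_13, finv_18_14, finv_18_15, finv_18_16, finv_18_17] <;> linarith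
  · rintro ⟨l1, l2, l3, rfl⟩
    funext j
    obtain ⟨j, hj⟩ := j
    interval_cases j <;>
      simp [MG, cG0, Matrix.mulVec, dotProduct, Fin.sum_univ_succ, finv_4_3, finv_5_3, finv_5_4, finv_6_3, finv_6_4, finv_6_5, finv_7_3, finv_7_4, finv_7_5, finv_7_6, finv_8_3, finv_8_4, finv_8_5, finv_8_6, finv_8_7, finv_9_3, finv_9_4, finv_9_5, finv_9_6, finv_9_7, finv_9_8, finv_10_3, finv_10_4, finv_10_5, finv_10_6, finv_10_7, finv_10_8, finv_10_9, finv_11_3, finv_11_4, finv_11_5, finv_11_6, finv_11_7, finv_11_8, finv_11_9, finv_11_10, finv_12_3, finv_12_4, finv_12_5, finv_12_6, finv_12_7, finv_12_8, finv_12_9, finv_12_10, finv_12_11, finv_13_3, finv_13_4, finv_13_5, finv_13_6, finv_13_7, finv_13_8, finv_13_9, finv_13_10, finv_13_11, finv_13_12, finv_14_3, finv_14_4, finv_14_5, finv_14_6, finv_14_7, finv_14_8, finv_14_9, finv_14_10, finv_14_11, finv_14_12, finv_14_13, finv_15_3, finv_15_4, finv_15_5, finv_15_6, finv_15_7, finv_15_8,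 finv_15_9, finv_15_10, finv_15_11, finv_15_12, finv_15_13, finv_15_14, finv_16_3, finv_16_4, finv_16_5, finv_16_6, finv_16_7, finv_16_8, finv_16_9, finv_16_10, finv_16_11, finv_16_12, finv_16_13, finv_16_14, finv_16_15, finv_17_3, finv_17_4, finv_17_5, finv_17_6, finv_17_7, finv_17_8, finv_17_9, finv_17_10, finv_17_11, finv_17_12, finv_17_13, finv_17_14, finv_17_15, finv_17_16, finv_18_3, finv_18_4, finv_18_5, finv_18_6, finv_18_7, finv_18_8, finv_18_9, finv_18_10, finv_18_11, finv_18_12, finv_18_13, finv_18_14, finv_18_15, finv_18_16, finv_18_17] <;> ring_nf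

/-- `M_G` has rank exactly 12 and its kernel is exactly the set of
vectors `c^G_0(λ1,λ2,λ3)`. -/
theorem MG_rank_and_kernel :
    MG.rank = 12 ∧
      (∀ c : Fin 15 → ℝ, MG.mulVec c = 0 ↔ ∃ l1 l2 l3 : ℝ, c = cG0 l1 l2 l3) := by
  refine ⟨?_, ker_iff⟩
  have hker : LinearMap.ker MG.mulVecLin =
      Submodule.span ℝ (Set.range ![cG0 1 0 0, cG0 0 1 0, cG0 0 0 1]) := by
    ext x
    rw [LinearMap.mem_ker, Matrix.mulVecLin_apply, ker_iff,
      Submodule.mem_span_range_iff_exists_fun ℝ]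
    constructor
    · rintro ⟨l1, l2, l3, rfl⟩
      exact ⟨![l1, l2, l3], by
        rw [Fin.sum_univ_three]
        simp only [Matrix.cons_val_zero, Matrix.cons_val_one, Matrix.head_cons,
          Matrix.cons_val_two, Matrix.tail_cons]
        exact (cG0_eq_sum _ _ _).symm⟩
    · rintro ⟨g, hg⟩
      refine ⟨g 0, g 1, g 2, ?_⟩
      rw [← hg, Fin.sum_univ_three]
      simp only [Matrix.cons_val_zero, Matrix.cons_val_one, Matrix.head_cons,
        Matrix.cons_val_two, Matrix.tail_cons]
      exact (cG0_eq_sum _ _ _).symm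
  have hindep : LinearIndependent ℝ ![cG0 1 0 0, cG0 0 1 0, cG0 0 0 1] := by
    rw [Fintype.linearIndependent_iff]
    intro g hg
    rw [Fin.sum_univ_three] at hg
    simp only [Matrix.cons_val_zero, Matrix.cons_val_one, Matrix.head_cons,
      Matrix.cons_val_two, Matrix.tail_cons] at hg
    rw [← cG0_eq_sum] at hg
    have h0 := congrFun hg 0
    have h1 := congrFun hg 1
    have h2 := congrFun hg 2
    simp [cG0] at h0 h1 h2
    intro i
    fin_cases i
    · show g 0 = 0; linarith
    · show g 1 = 0; linarith
    · show g 2 = 0; linarith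
  have hdim : Module.finrank ℝ (LinearMap.ker MG.mulVecLin) = 3 := by
    rw [hker, finrank_span_eq_card hindep]
    simp
  have hrn := LinearMap.finrank_range_add_finrank_ker MG.mulVecLin
  rw [hdim] at hrn
  simp [Module.finrank_pi] at hrn
  rw [Matrix.rank]
  omega
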